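/- arXiv:2409.18242 — 4 statements merged into one kernel-verified Lean document; each statement's English description precedes it below -/
import Mathlib

section
/- For every λ ≥ 0, the set R_λ H = {R_λ f : f ∈ H} is dense in V in the metric of V. -/
open scoped RealInnerProductSpace

/-!
`R_λ` is linear by uniqueness of the Riesz representative. A vector `u ∈ V` that is `V`-orthogonal to the whole range of `R_λ` satisfies
`(f, u)_H = λ (R_λ f, u)_H` for all `f`. Since `f ↦ R_λ f` is symmetric as a map into `H`,
testing this against `f = w := R_λ u` (with `u` viewed in `H`) gives `(w, u)_H = λ ‖w‖_H²`, while the defining identity of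
`R_λ u` tested against `w` gives `(w, u)_H = λ ‖w‖_H² + ‖w‖_V²`. Hence `w = 0`, then `u = 0` in `H`,
and `u = 0` in `V` because `V → H` is injective. A subspace with trivial orthogonal complement in a
Hilbert space is dense.
-/

section Resolvent

variable {V H : Type*} [NormedAddCommGroup V] [InnerProductSpace ℝ V]
  [NormedAddCommGroup H] [InnerProductSpace ℝ H]

def IsResolvent (ι : V →L[ℝ] H) (lam : ℝ) (R : H → V) : Prop :=
  ∀ f u, ⟪f, ι u⟫ = lam * ⟪ι (R f), ι u⟫ + ⟪R f, u⟫

theorem eq_zero_of_forall_smul_inner_add_inner_eq_zero (ι : V →L[ℝ] H) {lam : ℝ} (hlam : 0 ≤ lam)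
    {w : V} (hw : ∀ v, lam * ⟪ι w, ι v⟫ + ⟪w, v⟫ = 0) : w = 0 := by
  have hww := hw w
  rw [real_inner_self_eq_norm_sq, real_inner_self_eq_norm_sq] at hww
  have : ‖w‖ ^ 2 = 0 := by nlinarith [sq_nonneg ‖ι w‖, sq_nonneg ‖w‖]
  simpa using this

namespace IsResolvent

variable {ι : V →L[ℝ] H} {lam : ℝ} {R : H → V}

theorem eq_of_forall_inner (hR : IsResolvent ι lam R) (hlam : 0 ≤ lam) {f : H} {w : V}
    (hw : ∀ v, ⟪f, ι v⟫ = lam * ⟪ι w, ι v⟫ + ⟪w, v⟫) : R f = w := by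
  refine sub_eq_zero.mp (eq_zero_of_forall_smul_inner_add_inner_eq_zero ι hlam fun v ↦ ?_)
  have h₁ := hR f v
  have h₂ := hw v
  simp only [map_sub, inner_sub_left] at h₁ h₂ ⊢
  linear_combination h₂ - h₁

theorem map_add (hR : IsResolvent ι lam R) (hlam : 0 ≤ lam) (f g : H) :
    R (f + g) = R f + R g :=
  hR.eq_of_forall_inner hlam fun v ↦ by
    simp only [_root_.map_add, inner_add_left, hR f v, hR g v]
    ring

theorem map_smul (hR : IsResolvent ι lam R) (hlam : 0 ≤ lam) (a : ℝ) (f : H) :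
    R (a • f) = a • R f :=
  hR.eq_of_forall_inner hlam fun v ↦ by
    simp only [_root_.map_smul, real_inner_smul_left, hR f v]
    ring

def toLinearMap (hR : IsResolvent ι lam R) (hlam : 0 ≤ lam) : H →ₗ[ℝ] V where
  toFun := R
  map_add' := hR.map_add hlam
  map_smul' := hR.map_smul hlam

@[simp]
theorem coe_toLinearMap (hR : IsResolvent ι lam R) (hlam : 0 ≤ lam) : ⇑(hR.toLinearMap hlam) = R :=
  rfl

theorem inner_map_comm (hR : IsResolvent ι lam R) (f g : H) : ⟪ι (R f), g⟫ = ⟪f, ι (R g)⟫ := by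
  rw [real_inner_comm, hR g (R f), hR f (R g), real_inner_comm (ι (R g)),
    real_inner_comm (R g)]

theorem eq_zero_of_forall_inner_eq_zero (hR : IsResolvent ι lam R) (hinj : Function.Injective ι)
    {u : V} (hu : ∀ f, ⟪R f, u⟫ = 0) : u = 0 := by
  have horth : ∀ f, ⟪f, ι u⟫ = lam * ⟪ι (R f), ι u⟫ := fun f ↦ by rw [hR f u, hu f, add_zero]
  set w := R (ι u)
  have h₁ : ⟪ι w, ι u⟫ = lam * ‖ι w‖ ^ 2 := by
    rw [horth, hR.inner_map_comm, real_inner_self_eq_norm_sq]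
  have h₂ : ⟪ι u, ι w⟫ = lam * ‖ι w‖ ^ 2 + ‖w‖ ^ 2 := by
    rw [hR (ι u) w, real_inner_self_eq_norm_sq, real_inner_self_eq_norm_sq]
  have hw : w = 0 := by
    rw [real_inner_comm] at h₁
    have : ‖w‖ ^ 2 = 0 := by linarith
    simpa using this
  have hιu : ι u = 0 := by
    have := horth (ι u)
    rw [show R (ι u) = 0 from hw, map_zero, inner_zero_left, mul_zero] at this
    exact inner_self_eq_zero.mp this
  exact hinj (hιu.trans (map_zero ι).symm)

theorem denseRange [CompleteSpace V] (hR : IsResolvent ι lam R) (hinj : Function.Injective ι)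
    (hlam : 0 ≤ lam) : DenseRange R := by
  have hrange : Set.range R = LinearMap.range (hR.toLinearMap hlam) := by
    rw [LinearMap.coe_range, coe_toLinearMap]
  rw [DenseRange, hrange, Submodule.dense_iff_topologicalClosure_eq_top,
    Submodule.topologicalClosure_eq_top_iff, Submodule.eq_bot_iff]
  intro u hu
  exact hR.eq_zero_of_forall_inner_eq_zero hinj fun f ↦
    (Submodule.mem_orthogonal _ u).mp hu (R f) ⟨f, rfl⟩

end IsResolvent

end Resolvent

theorem stmt4_general
    {V H : Type*} [NormedAddCommGroup V] [InnerProductSpace ℝ V] [CompleteSpace V]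
    [NormedAddCommGroup H] [InnerProductSpace ℝ H]
    (ι : V →L[ℝ] H) (hinj : Function.Injective ι)
    (R : ℝ → H → V)
    (hR : ∀ lam : ℝ, 0 ≤ lam → ∀ f : H, ∀ u : V,
      ⟪f, ι u⟫ = lam * ⟪ι (R lam f), ι u⟫ + ⟪R lam f, u⟫)
    (lam : ℝ) (hlam : 0 ≤ lam) :
    DenseRange (R lam) :=
  IsResolvent.denseRange (hR lam hlam) hinj hlam

/-- For every λ ≥ 0, the set R_λ H is dense in V in the metric of V. -/
theorem stmt4
    {V H : Type*} [NormedAddCommGroup V] [InnerProductSpace ℝ V] [CompleteSpace V]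
    [NormedAddCommGroup H] [InnerProductSpace ℝ H] [CompleteSpace H]
    (ι : V →L[ℝ] H) (hinj : Function.Injective ι) (hdense : DenseRange ι)
    (hcontr : ∀ u : V, ‖ι u‖ ≤ ‖u‖)
    (R : ℝ → H → V)
    (hR : ∀ lam : ℝ, 0 ≤ lam → ∀ f : H, ∀ u : V,
      ⟪f, ι u⟫ = lam * ⟪ι (R lam f), ι u⟫ + ⟪R lam f, u⟫)
    (lam : ℝ) (hlam : 0 ≤ lam) :
    DenseRange (R lam) :=
  stmt4_general ι hinj R hR lam hlam
end

section
/- For every f ∈ V one has ‖f − λ R_λ f‖_V → 0 as λ → ∞. -/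
open scoped RealInnerProductSpace

set_option maxHeartbeats 1000000 in
/-- Pure real-arithmetic core of the estimate. -/
lemma stmt6_aux (ε F δ G lam a b c : ℝ)
    (hε : 0 < ε) (hF0 : 0 ≤ F) (ha0 : 0 ≤ a) (hb0 : 0 ≤ b) (hc0 : 0 ≤ c)
    (hδ0 : 0 ≤ δ) (hG0 : 0 ≤ G)
    (hδlt : δ < ε ^ 2 / (2 * (F + 1)))
    (hlam : (2 * ((G + 1) * (F + 1)) / ε ^ 2) ^ 4 + 1 ≤ lam)
    (hA : a ^ 2 + lam * b ^ 2 ≤ a * F)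
    (hB : a ^ 2 ≤ b * c)
    (hC : c ^ 2 ≤ δ * c + G * a)
    (hD : c ^ 2 ≤ F * c) : c < ε := by
  obtain ⟨Kc, hKc⟩ : ∃ Kc : ℝ, Kc = (G + 1) * (F + 1) := ⟨_, rfl⟩
  rw [← hKc] at hlam
  have hKc1 : 1 ≤ Kc := by nlinarith
  have hs0 : 0 < 2 * Kc / ε ^ 2 := by positivity
  have hlam1 : 1 ≤ lam := by nlinarith [pow_nonneg hs0.le 4]
  have hlam0 : (0 : ℝ) ≤ lam := by linarith
  have haF : a ≤ F := by nlinarith [mul_nonneg hlam0 (sq_nonneg b)]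
  have hcF : c ≤ F := by nlinarith
  have hlb : lam * b ^ 2 ≤ F ^ 2 := by nlinarith [sq_nonneg a]
  have hc2 : c ^ 2 ≤ F ^ 2 := by nlinarith
  have ha4 : lam * a ^ 4 ≤ F ^ 4 := by
    have e1 := mul_le_mul_of_nonneg_left (mul_self_le_mul_self (sq_nonneg a) hB) hlam0
    have e2 := mul_le_mul hlb hc2 (sq_nonneg c) (sq_nonneg F)
    nlinarith [e1, e2]
  have hterm1 : δ * c < ε ^ 2 / 2 := by
    have hfe : ε ^ 2 / (2 * (F + 1)) * (F + 1) = ε ^ 2 / 2 := by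
      field_simp
    have h1 : δ * (F + 1) < ε ^ 2 / (2 * (F + 1)) * (F + 1) :=
      mul_lt_mul_of_pos_right hδlt (by positivity)
    have h2 : δ * c ≤ δ * (F + 1) :=
      mul_le_mul_of_nonneg_left (by linarith) hδ0
    linarith [hfe ▸ h1]
  -- fourth root of lam
  obtain ⟨t, ht0, ht4⟩ : ∃ t : ℝ, 0 ≤ t ∧ t ^ 4 = lam :=
    ⟨Real.sqrt (Real.sqrt lam), Real.sqrt_nonneg _, by
      rw [show (Real.sqrt (Real.sqrt lam)) ^ 4 = ((Real.sqrt (Real.sqrt lam)) ^ 2) ^ 2 by ring,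
        Real.sq_sqrt (Real.sqrt_nonneg lam), Real.sq_sqrt hlam0]⟩
  have hts : 2 * Kc / ε ^ 2 < t := by
    by_contra hcon
    push_neg at hcon
    have h4 : t ^ 4 ≤ (2 * Kc / ε ^ 2) ^ 4 := pow_le_pow_left₀ ht0 hcon 4
    rw [ht4] at h4
    linarith
  have htpos : 0 < t := lt_trans hs0 hts
  have hat : a * t ≤ F := by
    have h4 : (a * t) ^ 4 ≤ F ^ 4 := by
      calc (a * t) ^ 4 = lam * a ^ 4 := by rw [← ht4]; ring
      _ ≤ F ^ 4 := ha4
    by_contra hcon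
    push_neg at hcon
    have := pow_lt_pow_left₀ hcon hF0 (by norm_num : 4 ≠ 0)
    linarith
  have hterm2 : G * a < ε ^ 2 / 2 := by
    have hGa : G * a * t ≤ G * F := by
      have := mul_le_mul_of_nonneg_left hat hG0
      linarith
    have hGF : G * F ≤ Kc := by linarith only [hKc, hG0, hF0]
    by_contra hcon
    push_neg at hcon
    have h1' : ε ^ 2 / 2 * t ≤ G * a * t := by
      have := mul_le_mul_of_nonneg_right hcon ht0
      linarith
    have h2' : Kc < ε ^ 2 / 2 * t := by
      have hfe : ε ^ 2 / 2 * (2 * Kc / ε ^ 2) = Kc := by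
        field_simp
      have hml := mul_lt_mul_of_pos_left hts (show (0:ℝ) < ε ^ 2 / 2 by positivity)
      linarith only [hfe, hml]
    linarith only [hGa, hGF, h1', h2']
  have hcε : c ^ 2 < ε ^ 2 := by linarith only [hC, hterm1, hterm2]
  by_contra hcon
  push_neg at hcon
  have := pow_le_pow_left₀ hε.le hcon 2
  linarith only [this, hcε]

/-- For every f ∈ V one has ‖f − λ R_λ f‖_V → 0 as λ → ∞. -/
theorem stmt6
    {V H : Type*} [NormedAddCommGroup V] [InnerProductSpace ℝ V] [CompleteSpace V]
    [NormedAddCommGroup H] [InnerProductSpace ℝ H] [CompleteSpace H]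
    (ι : V →L[ℝ] H) (hinj : Function.Injective ι) (hdense : DenseRange ι)
    (hcontr : ∀ u : V, ‖ι u‖ ≤ ‖u‖)
    (R : ℝ → H → V)
    (hR : ∀ lam : ℝ, 0 ≤ lam → ∀ f : H, ∀ u : V,
      ⟪f, ι u⟫ = lam * ⟪ι (R lam f), ι u⟫ + ⟪R lam f, u⟫)
    (f : V) :
    Filter.Tendsto (fun lam : ℝ => ‖f - lam • R lam (ι f)‖) Filter.atTop (nhds 0) := by
  classical
  set K : Submodule ℝ V := Submodule.span ℝ (Set.range (R 0)) with hKdef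
  have hrep : ∀ p ∈ K, ∃ g : H, ∀ u : V, ⟪g, ι u⟫ = ⟪p, u⟫ := by
    intro p hp
    induction hp using Submodule.span_induction with
    | mem x hx =>
      obtain ⟨g, rfl⟩ := hx
      exact ⟨g, fun u => by have := hR 0 le_rfl g u; simpa using this⟩
    | zero => exact ⟨0, fun u => by simp⟩
    | add x y _ _ hx hy =>
      obtain ⟨g1, h1⟩ := hx; obtain ⟨g2, h2⟩ := hy
      exact ⟨g1 + g2, fun u => by rw [inner_add_left, inner_add_left, h1, h2]⟩
    | smul c x _ hx =>
      obtain ⟨g, h⟩ := hx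
      exact ⟨c • g, fun u => by
        rw [real_inner_smul_left, real_inner_smul_left, h]⟩
  have horth : Kᗮ = ⊥ := by
    rw [Submodule.eq_bot_iff]
    intro v hv
    have h0 : ⟪R 0 (ι v), v⟫ = 0 := hv _ (Submodule.subset_span ⟨ι v, rfl⟩)
    have h1 : ⟪ι v, ι v⟫ = (0 : ℝ) := by
      have := hR 0 le_rfl (ι v) v; rw [this, h0]; ring
    have h2 : ι v = 0 := by rwa [inner_self_eq_zero] at h1
    exact hinj (by simpa using h2)
  have hdenseK : Dense (K : Set V) :=
    Submodule.dense_iff_topologicalClosure_eq_top.mpr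
      (Submodule.topologicalClosure_eq_top_iff.mpr horth)
  rw [Metric.tendsto_atTop]
  intro ε hε
  obtain ⟨p, hpball, hpK⟩ :=
    Metric.dense_iff.mp hdenseK f (ε ^ 2 / (2 * (‖f‖ + 1))) (by positivity)
  obtain ⟨g, hg⟩ := hrep p hpK
  have hδlt : ‖f - p‖ < ε ^ 2 / (2 * (‖f‖ + 1)) := by
    have := Metric.mem_ball.mp hpball
    rwa [dist_comm, dist_eq_norm] at this
  refine ⟨(2 * ((‖g‖ + 1) * (‖f‖ + 1)) / ε ^ 2) ^ 4 + 1, fun lam hlam => ?_⟩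
  have hs0 : (0:ℝ) ≤ (2 * ((‖g‖ + 1) * (‖f‖ + 1)) / ε ^ 2) ^ 4 := by positivity
  have hlam0 : (0 : ℝ) ≤ lam := by linarith [hlam, hs0]
  set u := R lam (ι f) with hu
  set w := f - lam • u with hw
  have hE : ∀ v : V, ⟪ι w, ι v⟫ = ⟪u, v⟫ := by
    intro v
    have h := hR lam hlam0 (ι f) v
    have hι : ι w = ι f - lam • ι u := by simp [hw]
    rw [hι, inner_sub_left, real_inner_smul_left]
    linarith
  have h1 : ‖ι w‖ ^ 2 = ⟪u, w⟫ := by rw [← hE w, real_inner_self_eq_norm_sq]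
  have hfwu : f = w + lam • u := by simp [hw]
  have h2 : ‖ι w‖ ^ 2 + lam * ‖u‖ ^ 2 = ⟪ι w, ι f⟫ := by
    rw [hE f]
    nth_rewrite 1 [hfwu]
    rw [inner_add_right, real_inner_smul_right, real_inner_self_eq_norm_sq, ← h1]
  have h3 : ‖w‖ ^ 2 = ⟪f, w⟫ - lam * ‖ι w‖ ^ 2 := by
    rw [← real_inner_self_eq_norm_sq]
    nth_rewrite 1 [hw]
    rw [inner_sub_left, real_inner_smul_left, h1]
  have hιf : ‖ι f‖ ≤ ‖f‖ := hcontr f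
  have cs1 : ⟪ι w, ι f⟫ ≤ ‖ι w‖ * ‖f‖ := by
    calc ⟪ι w, ι f⟫ ≤ ‖ι w‖ * ‖ι f‖ := real_inner_le_norm _ _
    _ ≤ ‖ι w‖ * ‖f‖ := mul_le_mul_of_nonneg_left hιf (norm_nonneg _)
  have cs2 : ⟪u, w⟫ ≤ ‖u‖ * ‖w‖ := real_inner_le_norm _ _
  have cs3 : ⟪f - p, w⟫ ≤ ‖f - p‖ * ‖w‖ := real_inner_le_norm _ _
  have cs4 : ⟪g, ι w⟫ ≤ ‖g‖ * ‖ι w‖ := real_inner_le_norm _ _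
  have csfw : ⟪f, w⟫ ≤ ‖f‖ * ‖w‖ := real_inner_le_norm _ _
  have hfw : ⟪f, w⟫ = ⟪f - p, w⟫ + ⟪g, ι w⟫ := by
    rw [hg w, inner_sub_left]; ring
  have hlamiw : 0 ≤ lam * ‖ι w‖ ^ 2 := mul_nonneg hlam0 (sq_nonneg _)
  have hA : ‖ι w‖ ^ 2 + lam * ‖u‖ ^ 2 ≤ ‖ι w‖ * ‖f‖ := by linarith
  have hB : ‖ι w‖ ^ 2 ≤ ‖u‖ * ‖w‖ := by linarith
  have hC : ‖w‖ ^ 2 ≤ ‖f - p‖ * ‖w‖ + ‖g‖ * ‖ι w‖ := by linarith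
  have hD : ‖w‖ ^ 2 ≤ ‖f‖ * ‖w‖ := by linarith
  have hre : ‖w‖ < ε :=
    stmt6_aux ε ‖f‖ ‖f - p‖ ‖g‖ lam ‖ι w‖ ‖u‖ ‖w‖ hε (norm_nonneg _) (norm_nonneg _)
      (norm_nonneg _) (norm_nonneg _) (norm_nonneg _) (norm_nonneg _) hδlt hlam hA hB hC hD
  simpa [Real.dist_eq, abs_of_nonneg (norm_nonneg w)] using hre
end

section
/- Let A : V → V* be a bounded linear operator, let Q : V* → V be the natural (Riesz) identification of V* with V (so ⟨v, v*⟩ = (v, Q v*)_V), let n ≥ 1 be an integer, S_n = n R_n, and Aⁿu := n (Q A S_n u − S_n Q A S_n u) for u ∈ H. Then for every u ∈ H one has 2 (u, Aⁿ u)_H = 2 ⟨S_n u, A S_n u⟩. Consequently, if there is δ > 0 with 2⟨v, A v⟩ ≤ −δ ‖v‖_V² for all v ∈ V, then 2 (u, Aⁿ u)_H ≤ −δ ‖S_n u‖_V² for every u ∈ H. -/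
open scoped RealInnerProductSpace

section Resolvent

variable {V H : Type*} [NormedAddCommGroup V] [InnerProductSpace ℝ V]
  [NormedAddCommGroup H] [InnerProductSpace ℝ H]
  {ι : V →L[ℝ] H} {R : H → V} {lam : ℝ}

theorem inner_resolvent_comm
    (hR : ∀ f u, ⟪f, ι u⟫ = lam * ⟪ι (R f), ι u⟫ + ⟪R f, u⟫) (f g : H) :
    ⟪f, ι (R g)⟫ = ⟪g, ι (R f)⟫ := by
  rw [hR f, hR g, real_inner_comm (ι (R g)), real_inner_comm (R g)]

/-- Expanding `⟪u, ι w⟫` by the defining identity of `R`, its `lam ⟪ι (R u), ι w⟫` part cancels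
against the second term by the symmetry `inner_resolvent_comm`. -/
theorem inner_smul_sub_smul_resolvent
    (hR : ∀ f u, ⟪f, ι u⟫ = lam * ⟪ι (R f), ι u⟫ + ⟪R f, u⟫) (u : H) (w : V) :
    ⟪u, ι (lam • (w - lam • R (ι w)))⟫ = ⟪lam • R u, w⟫ := by
  have hsymm : ⟪u, ι (R (ι w))⟫ = ⟪ι (R u), ι w⟫ := by
    rw [inner_resolvent_comm hR, real_inner_comm]
  simp only [map_smul, map_sub, inner_smul_right, inner_sub_right, inner_smul_left, hsymm,
    hR u w, RCLike.conj_to_real]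
  ring

end Resolvent

theorem stmt10_general
    {V H : Type*} [NormedAddCommGroup V] [InnerProductSpace ℝ V] [CompleteSpace V]
    [NormedAddCommGroup H] [InnerProductSpace ℝ H]
    (ι : V →L[ℝ] H)
    (R : ℝ → H → V)
    (hR : ∀ lam : ℝ, 0 ≤ lam → ∀ f : H, ∀ u : V,
      ⟪f, ι u⟫ = lam * ⟪ι (R lam f), ι u⟫ + ⟪R lam f, u⟫)
    (A : V →L[ℝ] StrongDual ℝ V)
    (n : ℕ) :
    let Q : StrongDual ℝ V → V := fun φ => (InnerProductSpace.toDual ℝ V).symm φ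
    let Sn : H → V := fun h => (n : ℝ) • R (n : ℝ) h
    let An : H → V := fun u => (n : ℝ) • (Q (A (Sn u)) - Sn (ι (Q (A (Sn u)))))
    (∀ u : H, 2 * ⟪u, ι (An u)⟫ = 2 * A (Sn u) (Sn u)) ∧
      (∀ δ : ℝ, 0 < δ → (∀ v : V, 2 * A v v ≤ -δ * ‖v‖ ^ 2) →
        ∀ u : H, 2 * ⟪u, ι (An u)⟫ ≤ -δ * ‖Sn u‖ ^ 2) := by
  intro Q Sn An
  have key (u : H) : ⟪u, ι (An u)⟫ = A (Sn u) (Sn u) := by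
    rw [inner_smul_sub_smul_resolvent (hR n n.cast_nonneg) u, real_inner_comm]
    exact InnerProductSpace.toDual_symm_apply
  refine ⟨fun u => by rw [key], fun δ _ hA u => ?_⟩
  rw [key]
  exact hA (Sn u)

/-- With `A : V → V*` bounded, `Q` the Riesz identification of `V*` with `V`,
`S_n = n R_n` and `Aⁿu = n (Q A S_n u − S_n Q A S_n u)`, one has
`2 (u, Aⁿ u)_H = 2 ⟨S_n u, A S_n u⟩` for every `u ∈ H`; consequently, if
`2⟨v, A v⟩ ≤ −δ ‖v‖_V²` for all `v ∈ V` with some `δ > 0`, then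
`2 (u, Aⁿ u)_H ≤ −δ ‖S_n u‖_V²` for every `u ∈ H`. -/
theorem stmt10
    {V H : Type*} [NormedAddCommGroup V] [InnerProductSpace ℝ V] [CompleteSpace V]
    [NormedAddCommGroup H] [InnerProductSpace ℝ H] [CompleteSpace H]
    (ι : V →L[ℝ] H) (hinj : Function.Injective ι) (hdense : DenseRange ι)
    (hcontr : ∀ u : V, ‖ι u‖ ≤ ‖u‖)
    (R : ℝ → H → V)
    (hR : ∀ lam : ℝ, 0 ≤ lam → ∀ f : H, ∀ u : V,
      ⟪f, ι u⟫ = lam * ⟪ι (R lam f), ι u⟫ + ⟪R lam f, u⟫)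
    (A : V →L[ℝ] StrongDual ℝ V)
    (n : ℕ) (hn : 1 ≤ n) :
    let Q : StrongDual ℝ V → V := fun φ => (InnerProductSpace.toDual ℝ V).symm φ
    let Sn : H → V := fun h => (n : ℝ) • R (n : ℝ) h
    let An : H → V := fun u => (n : ℝ) • (Q (A (Sn u)) - Sn (ι (Q (A (Sn u)))))
    (∀ u : H, 2 * ⟪u, ι (An u)⟫ = 2 * A (Sn u) (Sn u)) ∧
      (∀ δ : ℝ, 0 < δ → (∀ v : V, 2 * A v v ≤ -δ * ‖v‖ ^ 2) →
        ∀ u : H, 2 * ⟪u, ι (An u)⟫ ≤ -δ * ‖Sn u‖ ^ 2) :=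
  stmt10_general ι R hR A n
end

section
/- Let d ≥ 2 and let b : ℝ^d → ℝ be measurable and M ≥ 0 a constant such that λ^d |B ∩ {x : |b(x)| > λ}| ≤ M for every ball B of radius 1 and every λ > 0, where |·| denotes Lebesgue measure. Then for every r ∈ (1, d) there is a constant N depending only on d and r such that for every ball B of radius ρ ∈ (0,1]: ρ^r ⨍_{B} |b(x)|^r dx ≤ N M^{r/d}. -/
/-!
By the layer cake formula, `∫_B |b|^r = r ∫_0^∞ t^(r-1) |B ∩ {|b| > t}| dt`. For a ball `B` of
radius `ρ ≤ 1` the distribution function is at most `|B|`, and at most `M t^(-d)` since `B` lies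
in a unit ball. Splitting the `t`-integral where the two bounds cross, at `T = (M/|B|)^(1/d)`,
gives `⨍_B |b|^r ≤ d/(d-r) (M/|B|)^(r/d)`, and `|B| = c ρ^d` turns this into the claim with
`N = d/(d-r) c^(-r/d)`.
-/

open MeasureTheory Metric Set

namespace Real

theorem lintegral_Ioc_rpow_sub_one {r : ℝ} (hr : 0 < r) {T : ℝ} (hT : 0 ≤ T) :
    ∫⁻ t in Ioc 0 T, ENNReal.ofReal (t ^ (r - 1)) = ENNReal.ofReal (T ^ r / r) := by
  have hint : IntegrableOn (fun t : ℝ => t ^ (r - 1)) (Ioc 0 T) := by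
    rw [← intervalIntegrable_iff_integrableOn_Ioc_of_le hT]
    exact intervalIntegral.intervalIntegrable_rpow' (by linarith)
  rw [← ofReal_integral_eq_lintegral_ofReal hint
    ((ae_restrict_mem measurableSet_Ioc).mono fun t ht => rpow_nonneg ht.1.le _),
    ← intervalIntegral.integral_of_le hT, integral_rpow (Or.inl (by linarith)),
    sub_add_cancel, zero_rpow hr.ne', sub_zero]

theorem lintegral_Ioi_rpow_sub_one {p r : ℝ} (hrp : r < p) {T : ℝ} (hT : 0 < T) :
    ∫⁻ t in Ioi T, ENNReal.ofReal (t ^ (r - 1 - p)) = ENNReal.ofReal (T ^ (r - p) / (p - r)) := by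
  rw [← ofReal_integral_eq_lintegral_ofReal (integrableOn_Ioi_rpow_of_lt (by linarith) hT)
    ((ae_restrict_mem measurableSet_Ioi).mono fun t ht => rpow_nonneg (hT.trans ht).le _),
    integral_Ioi_rpow_of_lt (by linarith) hT, show r - 1 - p + 1 = r - p by ring,
    neg_div, ← div_neg, neg_sub]

end Real

open Real

namespace MeasureTheory

section WeakLp

variable {α : Type*} [MeasurableSpace α] {μ : Measure α} [IsFiniteMeasure μ] {f : α → ℝ}
  {p r M : ℝ}

theorem meas_lt_le_of_rpow_mul_measureReal_le
    (hdist : ∀ t > 0, t ^ p * μ.real {a | t < f a} ≤ M) {t : ℝ} (ht : 0 < t) :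
    μ {a | t < f a} ≤ ENNReal.ofReal (M * t ^ (-p)) := by
  rw [← ofReal_measureReal]
  refine ENNReal.ofReal_le_ofReal ?_
  rw [rpow_neg ht.le, ← div_eq_mul_inv, le_div_iff₀' (rpow_pos_of_pos ht p)]
  exact hdist t ht

theorem lintegral_Ioc_meas_lt_mul_rpow_le (hr : 0 < r) {T : ℝ} (hT : 0 ≤ T) :
    ∫⁻ t in Ioc 0 T, μ {a | t < f a} * ENNReal.ofReal (t ^ (r - 1))
      ≤ ENNReal.ofReal (μ.real univ * (T ^ r / r)) :=
  calc _ ≤ ∫⁻ t in Ioc 0 T, μ univ * ENNReal.ofReal (t ^ (r - 1)) :=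
        lintegral_mono fun t => mul_le_mul_left (measure_mono (subset_univ _)) _
    _ = _ := by
        rw [lintegral_const_mul _ (by fun_prop), lintegral_Ioc_rpow_sub_one hr hT,
          ← ofReal_measureReal, ← ENNReal.ofReal_mul measureReal_nonneg]

theorem lintegral_Ioi_meas_lt_mul_rpow_le (hM : 0 ≤ M) (hrp : r < p)
    (hdist : ∀ t > 0, t ^ p * μ.real {a | t < f a} ≤ M) {T : ℝ} (hT : 0 < T) :
    ∫⁻ t in Ioi T, μ {a | t < f a} * ENNReal.ofReal (t ^ (r - 1))
      ≤ ENNReal.ofReal (M * (T ^ (r - p) / (p - r))) :=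
  calc _ ≤ ∫⁻ t in Ioi T, ENNReal.ofReal M * ENNReal.ofReal (t ^ (r - 1 - p)) := by
        refine setLIntegral_mono' measurableSet_Ioi fun t ht => ?_
        have ht0 : 0 < t := hT.trans ht
        calc μ {a | t < f a} * ENNReal.ofReal (t ^ (r - 1))
            ≤ ENNReal.ofReal (M * t ^ (-p)) * ENNReal.ofReal (t ^ (r - 1)) := by
              gcongr
              exact meas_lt_le_of_rpow_mul_measureReal_le hdist ht0
          _ = _ := by
              rw [← ENNReal.ofReal_mul (by positivity), ← ENNReal.ofReal_mul hM, mul_assoc,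
                ← rpow_add ht0]
              ring_nf
    _ = _ := by
        rw [lintegral_const_mul _ (by fun_prop), lintegral_Ioi_rpow_sub_one hrp hT,
          ← ENNReal.ofReal_mul hM]

theorem lintegral_rpow_le_of_rpow_mul_measureReal_le [NeZero μ] (hf_nn : 0 ≤ᵐ[μ] f)
    (hf : AEMeasurable f μ) (hr : 0 < r) (hrp : r < p) (hM : 0 ≤ M)
    (hdist : ∀ t > 0, t ^ p * μ.real {a | t < f a} ≤ M) :
    ∫⁻ a, ENNReal.ofReal (f a ^ r) ∂μ
      ≤ ENNReal.ofReal (p / (p - r) * μ.real univ * (M / μ.real univ) ^ (r / p)) := by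
  rw [lintegral_rpow_eq_lintegral_meas_lt_mul μ hf_nn hf hr]
  set V := μ.real univ
  have hV : 0 < V := measureReal_univ_pos
  have hp : 0 < p := hr.trans hrp
  have hpr : 0 < p - r := sub_pos.2 hrp
  rcases hM.eq_or_lt with rfl | hM
  · have hnull : ∀ t > 0, μ {a | t < f a} = 0 := fun t ht => by
      simpa using meas_lt_le_of_rpow_mul_measureReal_le hdist ht
    rw [setLIntegral_congr_fun measurableSet_Ioi (g := 0) fun t ht => by
      rw [hnull t ht, zero_mul, Pi.zero_apply]]
    simp
  set T := (M / V) ^ (1 / p)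
  have hT : 0 < T := by positivity
  have hTr : T ^ r = (M / V) ^ (r / p) := by
    rw [← rpow_mul (by positivity)]; ring_nf
  have hTrp : M * T ^ (r - p) = V * (M / V) ^ (r / p) := by
    rw [← rpow_mul (by positivity), show 1 / p * (r - p) = r / p - 1 by field_simp,
      rpow_sub (by positivity), rpow_one]
    field_simp
  rw [← Ioc_union_Ioi_eq_Ioi hT.le, lintegral_union measurableSet_Ioi (Ioc_disjoint_Ioi le_rfl)]
  calc _ ≤ ENNReal.ofReal r * (ENNReal.ofReal (V * (T ^ r / r))
          + ENNReal.ofReal (M * (T ^ (r - p) / (p - r)))) := by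
        gcongr
        · exact lintegral_Ioc_meas_lt_mul_rpow_le hr hT.le
        · exact lintegral_Ioi_meas_lt_mul_rpow_le hM.le hrp hdist hT
    _ = _ := by
        rw [← ENNReal.ofReal_add (by positivity) (by positivity), ← ENNReal.ofReal_mul hr.le,
          ← mul_div_assoc M, hTrp, hTr]
        congr 1
        field_simp
        ring

theorem average_rpow_le_of_rpow_mul_measureReal_le (hf_nn : 0 ≤ᵐ[μ] f)
    (hf : AEMeasurable f μ) (hr : 0 < r) (hrp : r < p) (hM : 0 ≤ M)
    (hdist : ∀ t > 0, t ^ p * μ.real {a | t < f a} ≤ M) :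
    ⨍ a, f a ^ r ∂μ ≤ p / (p - r) * (M / μ.real univ) ^ (r / p) := by
  rcases eq_zero_or_neZero μ with rfl | _
  · simp [zero_rpow (div_pos hr (hr.trans hrp)).ne']
  have hV : 0 < μ.real univ := measureReal_univ_pos
  have hp : 0 < p := hr.trans hrp
  have hpr : 0 < p - r := sub_pos.2 hrp
  rw [average_eq, smul_eq_mul, inv_mul_le_iff₀ hV,
    integral_eq_lintegral_of_nonneg_ae (hf_nn.mono fun a ha => rpow_nonneg ha r)
      (hf.pow_const r).aestronglyMeasurable]
  refine ENNReal.toReal_le_of_le_ofReal (by positivity)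
    ((lintegral_rpow_le_of_rpow_mul_measureReal_le hf_nn hf hr hrp hM hdist).trans_eq ?_)
  ring_nf

end WeakLp

end MeasureTheory

theorem MeasureTheory.Measure.addHaar_real_ball_of_pos {E : Type*} [NormedAddCommGroup E]
    [NormedSpace ℝ E] [FiniteDimensional ℝ E] [MeasurableSpace E] [BorelSpace E]
    (μ : Measure E) [μ.IsAddHaarMeasure] (x : E) {ρ : ℝ} (hρ : 0 < ρ) :
    μ.real (ball x ρ) = ρ ^ Module.finrank ℝ E * μ.real (ball 0 1) := by
  rw [measureReal_def, Measure.addHaar_ball_of_pos μ x hρ, ENNReal.toReal_mul,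
    ENNReal.toReal_ofReal (by positivity), measureReal_def]

theorem stmt17_general (d : ℕ) (b : EuclideanSpace ℝ (Fin d) → ℝ)
    (hb : Measurable b) (M : ℝ) (hM : 0 ≤ M)
    (h : ∀ (x : EuclideanSpace ℝ (Fin d)) (lam : ℝ), 0 < lam →
      lam ^ (d : ℝ) * (volume (ball x 1 ∩ {y | lam < |b y|})).toReal ≤ M)
    (r : ℝ) (hr1 : 1 < r) (hr2 : r < d) :
    ∃ N : ℝ, ∀ (x : EuclideanSpace ℝ (Fin d)) (ρ : ℝ), 0 < ρ → ρ ≤ 1 →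
      ρ ^ r * ⨍ y in ball x ρ, |b y| ^ r ≤ N * M ^ (r / (d : ℝ)) := by
  have hr : 0 < r := zero_lt_one.trans hr1
  have hd_pos : (0 : ℝ) < d := hr.trans hr2
  set c := volume.real (ball (0 : EuclideanSpace ℝ (Fin d)) 1)
  have hc : 0 < c :=
    ENNReal.toReal_pos (measure_ball_pos volume 0 one_pos).ne' measure_ball_lt_top.ne
  refine ⟨d / (d - r) / c ^ (r / d), fun x ρ hρ hρ1 => ?_⟩
  have : IsFiniteMeasure (volume.restrict (ball x ρ)) :=
    isFiniteMeasure_restrict.2 measure_ball_lt_top.ne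
  have hdist : ∀ t > 0, t ^ (d : ℝ) * (volume.restrict (ball x ρ)).real {y | t < |b y|} ≤ M :=
    fun t ht => calc
      _ ≤ t ^ (d : ℝ) * volume.real (ball x 1 ∩ {y | t < |b y|}) := by
          gcongr
          rw [measureReal_restrict_apply' measurableSet_ball]
          exact measureReal_mono fun y hy => ⟨ball_subset_ball hρ1 hy.2, hy.1⟩
      _ ≤ M := h x t ht
  have hV : volume.real (ball x ρ) = ρ ^ d * c := by
    rw [Measure.addHaar_real_ball_of_pos volume x hρ, finrank_euclideanSpace_fin]
  calc ρ ^ r * ⨍ y in ball x ρ, |b y| ^ r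
      ≤ ρ ^ r * (d / (d - r) * (M / volume.real (ball x ρ)) ^ (r / d)) := by
        gcongr
        simpa only [measureReal_restrict_apply_univ] using
          average_rpow_le_of_rpow_mul_measureReal_le (ae_of_all _ fun y => abs_nonneg (b y))
            hb.abs.aemeasurable hr hr2 hM hdist
    _ = _ := by
        rw [hV, div_rpow hM (by positivity), mul_rpow (by positivity) hc.le, ← rpow_natCast,
          ← rpow_mul hρ.le, mul_div_cancel₀ _ hd_pos.ne']
        field_simp

/-- if `λ^d |B ∩ {|b| > λ}| ≤ M` for every ball `B` of radius 1 and every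
`λ > 0`, then for every `r ∈ (1, d)` there is `N = N(d, r)` such that for every ball of
radius `ρ ∈ (0,1]`: `ρ^r ⨍_B |b|^r ≤ N M^{r/d}`. -/
theorem stmt17 (d : ℕ) (hd : 2 ≤ d) (b : EuclideanSpace ℝ (Fin d) → ℝ)
    (hb : Measurable b) (M : ℝ) (hM : 0 ≤ M)
    (h : ∀ (x : EuclideanSpace ℝ (Fin d)) (lam : ℝ), 0 < lam →
      lam ^ (d : ℝ) * (volume (ball x 1 ∩ {y | lam < |b y|})).toReal ≤ M)
    (r : ℝ) (hr1 : 1 < r) (hr2 : r < d) :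
    ∃ N : ℝ, ∀ (x : EuclideanSpace ℝ (Fin d)) (ρ : ℝ), 0 < ρ → ρ ≤ 1 →
      ρ ^ r * ⨍ y in ball x ρ, |b y| ^ r ≤ N * M ^ (r / (d : ℝ)) :=
  stmt17_general d b hb M hM h r hr1 hr2
end
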